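/- For ν ≠ 0, the function w(t,x) = (1 − e^{x/ν} + x(e^{1/ν} − 1)) / (1 + t(e^{1/ν} − 1)) satisfies the nonlinear PDE w_t + w·w_x = ν·w·w_xx for x ∈ (0,1), t > 0, with w(t,0) = w(t,1) = 0 and w(0,x) = 1 − e^{x/ν} + x(e^{1/ν} − 1). -/

import Mathlib

theorem stmt_13 (ν : ℝ) (hν : ν ≠ 0) (w : ℝ → ℝ → ℝ)
    (hw : w = fun t x =>
      (1 - Real.exp (x / ν) + x * (Real.exp (1 / ν) - 1)) /
        (1 + t * (Real.exp (1 / ν) - 1))) :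
    (∀ x ∈ Set.Ioo (0:ℝ) 1, ∀ t > (0:ℝ),
      deriv (fun τ => w τ x) t + w t x * deriv (fun y => w t y) x
        = ν * w t x * deriv (deriv (fun y => w t y)) x) ∧
    (∀ t : ℝ, w t 0 = 0 ∧ w t 1 = 0) ∧
    (∀ x : ℝ, w 0 x = 1 - Real.exp (x / ν) + x * (Real.exp (1 / ν) - 1)) := by
  subst hw
  set E := Real.exp (1 / ν) with hE
  refine ⟨?_, ?_, ?_⟩
  · rintro x ⟨hx0, hx1⟩ t ht
    beta_reduce
    by_cases hd : 1 + t * (E - 1) = 0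
    · -- degenerate case: denominator vanishes at this t
      have hE1 : E - 1 ≠ 0 := by
        intro h
        rw [h, mul_zero, add_zero] at hd
        exact one_ne_zero hd
      -- spatial function is identically zero
      have hz : (fun y => (1 - Real.exp (y / ν) + y * (E - 1)) / (1 + t * (E - 1)))
          = fun _ => (0:ℝ) := by
        funext y; rw [hd, div_zero]
      -- time derivative: function is c * (τ - t)⁻¹, deriv at t is junk 0
      have hfeq : (fun τ => (1 - Real.exp (x / ν) + x * (E - 1)) / (1 + τ * (E - 1)))
          = fun τ => ((1 - Real.exp (x / ν) + x * (E - 1)) / (E - 1)) * ((τ - t)⁻¹) := by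
        funext τ
        have h1 : 1 + τ * (E - 1) = (τ - t) * (E - 1) := by linear_combination hd
        rw [h1, div_eq_mul_inv, div_eq_mul_inv, mul_inv]
        ring
      have hderiv : deriv (fun τ =>
          (1 - Real.exp (x / ν) + x * (E - 1)) / (1 + τ * (E - 1))) t = 0 := by
        rw [hfeq, deriv_const_mul_field]
        have h2 : (fun τ : ℝ => (τ - t)⁻¹) = fun τ => (fun y : ℝ => y⁻¹) (τ - t) := rfl
        rw [h2, deriv_comp_sub_const, deriv_inv]
        simp
      rw [hderiv, hz, hd]
      simp
    · -- main case: denominator nonzero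
      set d : ℝ := 1 + t * (E - 1) with hdd
      -- time derivative
      have hDt : HasDerivAt (fun τ => 1 + τ * (E - 1)) (E - 1) t := by
        simpa using ((hasDerivAt_id t).mul_const (E - 1)).const_add 1
      have hderivT : deriv (fun τ =>
          (1 - Real.exp (x / ν) + x * (E - 1)) / (1 + τ * (E - 1))) t
          = (0 * d - (1 - Real.exp (x / ν) + x * (E - 1)) * (E - 1)) / d ^ 2 :=
        ((hasDerivAt_const t (1 - Real.exp (x / ν) + x * (E - 1))).div hDt hd).deriv
      -- spatial derivatives
      have hexp : ∀ y : ℝ,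
          HasDerivAt (fun z : ℝ => Real.exp (z / ν)) (Real.exp (y / ν) * (1 / ν)) y := by
        intro y
        simpa [Function.comp_def] using (Real.hasDerivAt_exp (y / ν)).comp y ((hasDerivAt_id y).div_const ν)
      have hNy : ∀ y : ℝ, HasDerivAt (fun z => 1 - Real.exp (z / ν) + z * (E - 1))
          (-(Real.exp (y / ν) * (1 / ν)) + (E - 1)) y := by
        intro y
        simpa [Pi.add_def] using ((hexp y).const_sub 1).add ((hasDerivAt_id y).mul_const (E - 1))
      have hderivX : deriv (fun y => (1 - Real.exp (y / ν) + y * (E - 1)) / d)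
          = fun y => (-(Real.exp (y / ν) * (1 / ν)) + (E - 1)) / d := by
        funext y
        exact ((hNy y).div_const d).deriv
      have hderivXX : deriv (deriv (fun y => (1 - Real.exp (y / ν) + y * (E - 1)) / d)) x
          = (-(Real.exp (x / ν) * (1 / ν) * (1 / ν))) / d := by
        rw [hderivX]
        exact ((((hexp x).mul_const (1 / ν)).neg.add_const (E - 1)).div_const d).deriv
      rw [hderivT, hderivXX, hderivX]
      beta_reduce
      have hEx : Real.exp (x / ν) > 0 := Real.exp_pos _
      field_simp
      ring
  · intro t
    constructor
    · show (1 - Real.exp (0 / ν) + 0 * (E - 1)) / (1 + t * (E - 1)) = 0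
      norm_num
    · show (1 - Real.exp (1 / ν) + 1 * (E - 1)) / (1 + t * (E - 1)) = 0
      rw [show (1:ℝ) - Real.exp (1 / ν) + 1 * (E - 1) = 0 by rw [hE]; ring, zero_div]
  · intro x
    show (1 - Real.exp (x / ν) + x * (E - 1)) / (1 + 0 * (E - 1)) = _
    norm_num
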